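/- arXiv:1310.5455 — 5 statements merged into one kernel-verified Lean document; each statement's English description precedes it below -/
import Mathlib

section
/- For all trace-zero 3×3 matrices x, y over F, the product x*y = ω·xy − ω²·yx − ((ω−ω²)/3)·tr(xy)·1 satisfies (x*y)*x = n(x)•y and x*(y*x) = n(x)•y, where n(x) is the coefficient of T in the characteristic polynomial det(T·1 − x). -/
/-!
Expanding the Okubo product twice and using `ω³ = 1`, `ω + ω² = -1` and `(ω - ω²)² = -3`, both
`(x*y)*x` and `x*(y*x)` collapse, for traceless `x`, to the ω-free expression
`tr(xy) x + tr(x²y) 1 - (x²y + xyx + yx²)`. For traceless `x` and `y` this equals `n(x) y`: it is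
the derivative at `x` in the direction `y` of the Cayley–Hamilton identity `x³ + n(x) x - det x = 0`.
-/

variable {F : Type} [Field F]

/-- The Okubo product on `3×3` matrices (restricted to trace-zero matrices):
`x * y = ω • (xy) - ω² • (yx) - ((ω - ω²)/3) tr(xy) • 1`. -/
def okm (ω : F) (x y : Matrix (Fin 3) (Fin 3) F) : Matrix (Fin 3) (Fin 3) F :=
  ω • (x * y) - ω ^ 2 • (y * x) -
    (((ω - ω ^ 2) / 3) * (x * y).trace) • (1 : Matrix (Fin 3) (Fin 3) F)

/-- The quadratic form `n(x)`: the coefficient of `T` in the characteristic polynomial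
`det (T•1 - x) = T³ - tr(x)T² + n(x)T - det(x)`. -/
noncomputable def nq (x : Matrix (Fin 3) (Fin 3) F) : F := x.charpoly.coeff 1

open Matrix

lemma three_ne_zero_of_sq_add_self_add_one_eq_zero {ω : F} (hω : ω ^ 2 + ω + 1 = 0)
    (hω1 : ω ≠ 1) : (3 : F) ≠ 0 := by
  intro h3
  have : (ω - 1) ^ 2 = 0 := by linear_combination hω - ω * h3
  exact hω1 (sub_eq_zero.mp (pow_eq_zero_iff two_ne_zero |>.mp this))

section OkuboProduct

variable {ω : F} (hω : ω ^ 2 + ω + 1 = 0) (h3 : (3 : F) ≠ 0)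
  {x : Matrix (Fin 3) (Fin 3) F} (hx : x.trace = 0) (y : Matrix (Fin 3) (Fin 3) F)
include hω h3 hx

lemma okm_okm_left_of_trace_eq_zero :
    okm ω (okm ω x y) x =
      (x * y).trace • x + (x * x * y).trace • 1 - (x * x * y + x * y * x + y * x * x) := by
  have htr : (x * (y * x)).trace = (x * (x * y)).trace := by
    rw [← Matrix.mul_assoc, trace_mul_comm]
  have htr' : (y * (x * x)).trace = (x * (x * y)).trace := by
    rw [trace_mul_comm, Matrix.mul_assoc]
  simp only [okm, sub_mul, mul_sub, Matrix.smul_mul, Matrix.mul_smul, Matrix.one_mul,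
    Matrix.mul_one, trace_sub, trace_smul, smul_eq_mul, Matrix.mul_assoc, hx, htr, htr']
  match_scalars <;> grind

lemma okm_okm_right_of_trace_eq_zero :
    okm ω x (okm ω y x) =
      (x * y).trace • x + (x * x * y).trace • 1 - (x * x * y + x * y * x + y * x * x) := by
  have htr : (x * (y * x)).trace = (x * (x * y)).trace := by
    rw [← Matrix.mul_assoc, trace_mul_comm]
  simp only [okm, sub_mul, mul_sub, Matrix.smul_mul, Matrix.mul_smul, Matrix.one_mul,
    Matrix.mul_one, trace_sub, trace_smul, smul_eq_mul, Matrix.mul_assoc, hx, htr,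
    trace_mul_comm y x]
  match_scalars <;> grind

end OkuboProduct

lemma nq_eq_sum_principal_minors (x : Matrix (Fin 3) (Fin 3) F) :
    nq x = x 0 0 * x 1 1 - x 0 1 * x 1 0 + (x 0 0 * x 2 2 - x 0 2 * x 2 0)
      + (x 1 1 * x 2 2 - x 1 2 * x 2 1) := by
  rw [nq, charpoly, det_fin_three]
  simp only [charmatrix_apply_eq, charmatrix_apply_ne, ne_eq, Fin.reduceEq, not_false_eq_true]
  ring_nf
  simp only [Polynomial.X_mul_C, Polynomial.X_pow_mul_C, Polynomial.coeff_sub, Polynomial.coeff_add,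
    Polynomial.coeff_C_mul, Polynomial.coeff_X_one, Polynomial.coeff_X_pow, Polynomial.coeff_C,
    Polynomial.coeff_mul_C, OfNat.one_ne_ofNat, one_ne_zero, ↓reduceIte, mul_zero, zero_mul, mul_one,
    add_zero, sub_zero]
  ring

lemma nq_smul_eq_of_trace_eq_zero {x y : Matrix (Fin 3) (Fin 3) F} (hx : x.trace = 0)
    (hy : y.trace = 0) :
    nq x • y =
      (x * y).trace • x + (x * x * y).trace • 1 - (x * x * y + x * y * x + y * x * x) := by
  have hx22 : x 2 2 = -x 0 0 - x 1 1 := by rw [trace_fin_three] at hx; linear_combination hx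
  have hy22 : y 2 2 = -y 0 0 - y 1 1 := by rw [trace_fin_three] at hy; linear_combination hy
  rw [nq_eq_sum_principal_minors]
  ext i j
  fin_cases i <;> fin_cases j <;>
    simp only [Fin.zero_eta, Fin.mk_one, Fin.reduceFinMk, Matrix.sub_apply, Matrix.add_apply,
      Matrix.smul_apply, smul_eq_mul, mul_apply, Fin.sum_univ_three, trace_fin_three, one_apply_eq,
      one_apply_ne, ne_eq, Fin.reduceEq, not_false_eq_true, hx22, hy22] <;>
    ring

/-- For trace-zero `3×3` matrices `x, y` over a field containing a
primitive cube root of unity `ω`, the Okubo product satisfies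
`(x*y)*x = n(x) • y = x*(y*x)`. -/
theorem okubo_matrix_composition_identity (ω : F) (hω : ω ^ 2 + ω + 1 = 0) (hω1 : ω ≠ 1)
    (x y : Matrix (Fin 3) (Fin 3) F) (hx : x.trace = 0) (hy : y.trace = 0) :
    okm ω (okm ω x y) x = nq x • y ∧ okm ω x (okm ω y x) = nq x • y := by
  have h3 := three_ne_zero_of_sq_add_self_add_one_eq_zero hω hω1
  have hpolar := nq_smul_eq_of_trace_eq_zero hx hy
  exact ⟨(okm_okm_left_of_trace_eq_zero hω h3 hx y).trans hpolar.symm,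
    (okm_okm_right_of_trace_eq_zero hω h3 hx y).trans hpolar.symm⟩
end

section
/- Let V be a finite-dimensional vector space over a field F equipped with an F-bilinear multiplication m : V → V → V and a quadratic form q : V → F whose polar form b(x,y) = q(x+y) − q(x) − q(y) is nondegenerate. Then the following are equivalent: (1) q(m x y) = q(x)·q(y) for all x, y ∈ V and b(m x y, z) = b(x, m y z) for all x, y, z ∈ V; (2) m (m x y) x = q(x) • y and m x (m y x) = q(x) • y for all x, y ∈ V. -/
/-!
(1) ⇒ (2): by associativity `b((xy)x, w) = b(xy, xw)` and `b(w, x(yx)) = b(wx, yx)`, and the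
linearizations of `q(xy) = q(x)q(y)` turn these into `q(x) b(y, w)` and `q(x) b(w, y)`;
nondegeneracy of `b` concludes.

(2) ⇒ (1): evaluating `((xy)x)(xy) = q(xy) x` in two ways gives `q(xy) x = q(x)q(y) x`.
For associativity, the defect `f(y) = b(xy, z) - b(x, yz)` satisfies `q(y) f(y) = 0` and
`f(y) b(y, w) = -q(y) f(w)`, both from the linearized multiplicativity together with
`(yz)y = q(y) z` and its linearization `(yz)w + (wz)y = b(y, w) z`. If `q(y) ≠ 0` the first
identity gives `f(y) = 0`; if `q(y) = 0` the second makes `f(y) y` orthogonal to everything.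
-/

open QuadraticMap

namespace SymmetricComposition

section CommRing

variable {R M : Type*} [CommRing R] [AddCommGroup M] [Module R M]
  {m : M →ₗ[R] M →ₗ[R] M} {q : QuadraticForm R M}

theorem eq_of_forall_polar_eq (hb : ∀ v : M, (∀ w : M, polar q v w = 0) → v = 0) {u v : M}
    (h : ∀ w, polar q u w = polar q v w) : u = v :=
  sub_eq_zero.mp <| hb _ fun w => by rw [polar_sub_left, h, sub_self]

theorem polar_mul_mul_right (hq : ∀ x y, q (m x y) = q x * q y) (x z y : M) :
    polar q (m x y) (m z y) = polar q x z * q y := by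
  simp only [polar, ← LinearMap.add_apply, ← map_add, hq]
  ring

theorem polar_mul_mul_left (hq : ∀ x y, q (m x y) = q x * q y) (x y w : M) :
    polar q (m x y) (m x w) = q x * polar q y w := by
  simp only [polar, ← map_add, hq]
  ring

theorem polar_mul_add_polar_mul (hq : ∀ x y, q (m x y) = q x * q y) (x z y w : M) :
    polar q (m x y) (m z w) + polar q (m x w) (m z y) = polar q x z * polar q y w := by
  have h := polar_mul_mul_right hq x z (y + w)
  simp only [map_add, polar_add_left, polar_add_right, QuadraticMap.map_add q y w,
    polar_mul_mul_right hq] at h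
  linear_combination h

theorem mul_mul_right_eq_smul (hb : ∀ v : M, (∀ w : M, polar q v w = 0) → v = 0)
    (hq : ∀ x y, q (m x y) = q x * q y)
    (hassoc : ∀ x y z, polar q (m x y) z = polar q x (m y z)) (x y : M) :
    m (m x y) x = q x • y :=
  eq_of_forall_polar_eq hb fun w => by
    rw [hassoc, polar_mul_mul_left hq, polar_smul_left, smul_eq_mul]

theorem mul_left_mul_eq_smul (hb : ∀ v : M, (∀ w : M, polar q v w = 0) → v = 0)
    (hq : ∀ x y, q (m x y) = q x * q y)
    (hassoc : ∀ x y z, polar q (m x y) z = polar q x (m y z)) (x y : M) :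
    m x (m y x) = q x • y :=
  eq_of_forall_polar_eq hb fun w => by
    rw [polar_comm, ← hassoc, polar_mul_mul_right hq, polar_comm, polar_smul_left, smul_eq_mul,
      mul_comm]

theorem mul_mul_add_mul_mul (h1 : ∀ x y, m (m x y) x = q x • y) (x y z : M) :
    m (m x y) z + m (m z y) x = polar q x z • y := by
  have h := h1 (x + z) y
  simp only [map_add, LinearMap.add_apply, QuadraticMap.map_add q x z, add_smul, h1] at h
  linear_combination (norm := module) h

theorem mul_polar_mul_eq_mul_polar_mul (h1 : ∀ x y, m (m x y) x = q x • y)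
    (hq : ∀ x y, q (m x y) = q x * q y) (x y z : M) :
    q y * polar q (m x y) z = q y * polar q x (m y z) := by
  have h := polar_mul_mul_right hq x (m y z) y
  rw [h1, polar_smul_right, smul_eq_mul] at h
  linear_combination h

theorem polar_mul_sub_polar_mul_mul_polar (h1 : ∀ x y, m (m x y) x = q x • y)
    (hq : ∀ x y, q (m x y) = q x * q y) (x y z w : M) :
    (polar q (m x y) z - polar q x (m y z)) * polar q y w =
      -(q y * (polar q (m x w) z - polar q x (m w z))) := by
  have hlin : polar q (m x y) (m (m y z) w) + polar q (m x y) (m (m w z) y) =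
      polar q y w * polar q (m x y) z := by
    rw [← polar_add_right, mul_mul_add_mul_mul h1, polar_smul_right, smul_eq_mul]
  have hfull := polar_mul_add_polar_mul hq x (m y z) y w
  rw [h1, polar_smul_right, smul_eq_mul] at hfull
  rw [polar_mul_mul_right hq] at hlin
  linear_combination hfull - hlin

end CommRing

section IsDomain

variable {R M : Type*} [CommRing R] [IsDomain R] [AddCommGroup M] [Module R M]
  [Module.IsTorsionFree R M] {m : M →ₗ[R] M →ₗ[R] M} {q : QuadraticForm R M}

theorem map_mul_of_mul_mul_eq_smul (h1 : ∀ x y, m (m x y) x = q x • y) (h2 : ∀ x y, m x (m y x) = q x • y)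
    (x y : M) : q (m x y) = q x * q y := by
  rcases eq_or_ne x 0 with rfl | hx
  · simp
  refine smul_left_injective R hx ?_
  have h := h1 (m x y) x
  rw [h1 x y, LinearMap.map_smul₂, h2, smul_smul] at h
  exact h.symm

theorem polar_mul_eq_polar_mul (hb : ∀ v : M, (∀ w : M, polar q v w = 0) → v = 0)
    (h1 : ∀ x y, m (m x y) x = q x • y) (hq : ∀ x y, q (m x y) = q x * q y) (x y z : M) :
    polar q (m x y) z = polar q x (m y z) := by
  rcases eq_or_ne (q y) 0 with hy | hy
  · have hdefect : (polar q (m x y) z - polar q x (m y z)) • y = 0 := hb _ fun w => by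
      rw [polar_smul_left, smul_eq_mul, polar_mul_sub_polar_mul_mul_polar h1 hq, hy, zero_mul,
        neg_zero]
    rcases smul_eq_zero.mp hdefect with h | rfl
    · exact sub_eq_zero.mp h
    · simp
  · exact mul_left_cancel₀ hy (mul_polar_mul_eq_mul_polar_mul h1 hq x y z)

end IsDomain

end SymmetricComposition

open SymmetricComposition

theorem symmetric_composition_iff_general (F V : Type) [Field F] [AddCommGroup V] [Module F V]
    (m : V →ₗ[F] V →ₗ[F] V) (q : QuadraticForm F V)
    (hb : ∀ v : V, (∀ w : V, QuadraticMap.polar q v w = 0) → v = 0) :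
    ((∀ x y : V, q (m x y) = q x * q y) ∧
      (∀ x y z : V, QuadraticMap.polar q (m x y) z = QuadraticMap.polar q x (m y z))) ↔
    (∀ x y : V, m (m x y) x = q x • y ∧ m x (m y x) = q x • y) := by
  refine ⟨fun ⟨hq, hassoc⟩ x y =>
    ⟨mul_mul_right_eq_smul hb hq hassoc x y, mul_left_mul_eq_smul hb hq hassoc x y⟩, fun h => ?_⟩
  have hq := map_mul_of_mul_mul_eq_smul (fun x y => (h x y).1) (fun x y => (h x y).2)
  exact ⟨hq, polar_mul_eq_polar_mul hb (fun x y => (h x y).1) hq⟩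

/-- Let `V` be a finite-dimensional vector space over a field `F` with a
bilinear multiplication `m` and a quadratic form `q` whose polar form `b` is
nondegenerate.  Then `q` is multiplicative and `b` is associative with respect to `m` if
and only if `m (m x y) x = q(x) • y = m x (m y x)` for all `x, y`. -/
theorem symmetric_composition_iff (F V : Type) [Field F] [AddCommGroup V] [Module F V]
    [FiniteDimensional F V]
    (m : V →ₗ[F] V →ₗ[F] V) (q : QuadraticForm F V)
    (hb : ∀ v : V, (∀ w : V, QuadraticMap.polar q v w = 0) → v = 0) :
    ((∀ x y : V, q (m x y) = q x * q y) ∧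
      (∀ x y z : V, QuadraticMap.polar q (m x y) z = QuadraticMap.polar q x (m y z))) ↔
    (∀ x y : V, m (m x y) x = q x • y ∧ m x (m y x) = q x • y) :=
  symmetric_composition_iff_general F V m q hb
end

section
/- Over any field F, the split Okubo algebra satisfies (x*y)*x = n(x)•y and x*(y*x) = n(x)•y for all x, y ∈ O; consequently n(x*y) = n(x)·n(y) and b(x*y, z) = b(x, y*z) for all x, y, z ∈ O, i.e., (O, *, n) is a symmetric composition algebra. -/
open scoped BigOperators

/-- The grading group `ℤ₃ × ℤ₃`. -/
abbrev OkG : Type := ZMod 3 × ZMod 3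

/-- The index set of the standard basis of the split Okubo algebra:
the nonzero elements of `ℤ₃ × ℤ₃`. -/
abbrev OkI : Type := {g : OkG // g ≠ 0}

variable (R : Type) [CommRing R]

/-- The structure constants `c(g,h) = 1 - ((g₁h₂ - g₂h₁).val : ℤ)` of the split Okubo algebra. -/
def okc (g h : OkG) : R :=
  ((1 - (((g.1 * h.2 - g.2 * h.1 : ZMod 3)).val : ℤ) : ℤ) : R)

/-- Underlying function of the split Okubo multiplication. -/
def okMulFun (x y : OkI → R) : OkI → R := fun k =>
  ∑ g : OkI, ∑ h : OkI,
    (if (g : OkG) + (h : OkG) = (k : OkG) then okc R (g : OkG) (h : OkG) else 0) * (x g * y h)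

/-- The split Okubo multiplication, as a bilinear map: the unique `R`-bilinear map with
`e_g * e_h = 0` if `g + h = 0` and `e_g * e_h = c(g,h) • e_(g+h)` otherwise. -/
def okMul : (OkI → R) →ₗ[R] (OkI → R) →ₗ[R] (OkI → R) :=
  LinearMap.mk₂ R (okMulFun R)
    (by intro m₁ m₂ n; funext k; simp [okMulFun, add_mul, mul_add, Finset.sum_add_distrib])
    (by intro c m n; funext k
        simp only [okMulFun, Pi.smul_apply, smul_eq_mul, Finset.mul_sum]
        exact Finset.sum_congr rfl fun g _ => Finset.sum_congr rfl fun h _ => by ring)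
    (by intro m n₁ n₂; funext k; simp [okMulFun, add_mul, mul_add, Finset.sum_add_distrib])
    (by intro c m n; funext k
        simp only [okMulFun, Pi.smul_apply, smul_eq_mul, Finset.mul_sum]
        exact Finset.sum_congr rfl fun g _ => Finset.sum_congr rfl fun h _ => by ring)

/-- The norm (quadratic form) of the split Okubo algebra: the unique quadratic form
with `n(e_g) = 0` and polar form `b(e_g, e_h) = 1` if `g + h = 0`, and `0` otherwise. -/
def okN (x : OkI → R) : R :=
  x ⟨(1, 0), by decide⟩ * x ⟨(2, 0), by decide⟩ +
  x ⟨(0, 1), by decide⟩ * x ⟨(0, 2), by decide⟩ +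
  x ⟨(1, 1), by decide⟩ * x ⟨(2, 2), by decide⟩ +
  x ⟨(1, 2), by decide⟩ * x ⟨(2, 1), by decide⟩

/-- The polar form of the norm `okN`. -/
def okB (x y : OkI → R) : R := okN R (x + y) - okN R x - okN R y

/-- The basis element `e_g` of the split Okubo algebra. -/
def okE (g : OkI) : OkI → R := Pi.single g 1

/-- The sum `e = ∑_{g ∈ I} e_g` of all eight basis elements. -/
def oke : OkI → R := ∑ g : OkI, okE R g


/-!
Every claimed identity is a polynomial identity with integer coefficients in the coordinates of
`x`, `y`, `z`, so it holds over any commutative ring. Reading off the multiplication table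
coordinatewise turns each of them into a `ring` computation.
-/

abbrev okIdx (a b : ZMod 3) (h : ((a, b) : OkG) ≠ 0 := by decide) : OkI := ⟨(a, b), h⟩

lemma okI_cases (k : OkI) :
    k = okIdx 0 1 ∨ k = okIdx 0 2 ∨ k = okIdx 1 0 ∨ k = okIdx 1 1 ∨
    k = okIdx 1 2 ∨ k = okIdx 2 0 ∨ k = okIdx 2 1 ∨ k = okIdx 2 2 := by
  revert k; decide

lemma sum_okI {M : Type*} [AddCommMonoid M] (f : OkI → M) :
    ∑ g : OkI, f g = f (okIdx 0 1) + f (okIdx 0 2) + f (okIdx 1 0) + f (okIdx 1 1) +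
      f (okIdx 1 2) + f (okIdx 2 0) + f (okIdx 2 1) + f (okIdx 2 2) := by
  rw [← Fintype.sum_bijective (![okIdx 0 1, okIdx 0 2, okIdx 1 0, okIdx 1 1, okIdx 1 2,
    okIdx 2 0, okIdx 2 1, okIdx 2 2] : Fin 8 → OkI) (by decide) _ f (fun _ => rfl),
    Fin.sum_univ_eight]
  rfl

lemma okc_eq_ite (g h : OkG) : okc R g h =
    if g.1 * h.2 - g.2 * h.1 = 0 then 1 else if g.1 * h.2 - g.2 * h.1 = 1 then 0 else -1 := by
  unfold okc
  generalize g.1 * h.2 - g.2 * h.1 = d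
  obtain rfl | rfl | rfl : d = 0 ∨ d = 1 ∨ d = 2 := by revert d; decide
  · rw [if_pos rfl]; simp
  · rw [if_neg (by decide), if_pos rfl, show (1 : ZMod 3).val = 1 from rfl]; norm_num
  · rw [if_neg (by decide), if_neg (by decide), show (2 : ZMod 3).val = 2 from rfl]; norm_num

section MultiplicationTable

variable {R} (x y : OkI → R)

lemma okMul_apply_eq_sum (k : OkI) : okMul R x y k = ∑ g : OkI, ∑ h : OkI,
    (if (g : OkG) + h = k then okc R g h else 0) * (x g * y h) :=
  rfl

lemma okMul_apply_01 : okMul R x y (okIdx 0 1) = x (okIdx 0 2) * y (okIdx 0 2)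
    - x (okIdx 2 0) * y (okIdx 1 1) - x (okIdx 2 1) * y (okIdx 1 0)
    - x (okIdx 2 2) * y (okIdx 1 2) := by
  simp (config := { decide := true }) only [okMul_apply_eq_sum, sum_okI, okc_eq_ite, if_true,
    if_false]
  ring

lemma okMul_apply_02 : okMul R x y (okIdx 0 2) = x (okIdx 0 1) * y (okIdx 0 1)
    - x (okIdx 1 0) * y (okIdx 2 2) - x (okIdx 1 1) * y (okIdx 2 1)
    - x (okIdx 1 2) * y (okIdx 2 0) := by
  simp (config := { decide := true }) only [okMul_apply_eq_sum, sum_okI, okc_eq_ite, if_true,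
    if_false]
  ring

lemma okMul_apply_10 : okMul R x y (okIdx 1 0) = x (okIdx 2 0) * y (okIdx 2 0)
    - x (okIdx 0 1) * y (okIdx 1 2) - x (okIdx 1 1) * y (okIdx 0 2)
    - x (okIdx 2 1) * y (okIdx 2 2) := by
  simp (config := { decide := true }) only [okMul_apply_eq_sum, sum_okI, okc_eq_ite, if_true,
    if_false]
  ring

lemma okMul_apply_11 : okMul R x y (okIdx 1 1) = x (okIdx 2 2) * y (okIdx 2 2)
    - x (okIdx 0 1) * y (okIdx 1 0) - x (okIdx 1 2) * y (okIdx 0 2)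
    - x (okIdx 2 0) * y (okIdx 2 1) := by
  simp (config := { decide := true }) only [okMul_apply_eq_sum, sum_okI, okc_eq_ite, if_true,
    if_false]
  ring

lemma okMul_apply_12 : okMul R x y (okIdx 1 2) = x (okIdx 2 1) * y (okIdx 2 1)
    - x (okIdx 0 1) * y (okIdx 1 1) - x (okIdx 1 0) * y (okIdx 0 2)
    - x (okIdx 2 2) * y (okIdx 2 0) := by
  simp (config := { decide := true }) only [okMul_apply_eq_sum, sum_okI, okc_eq_ite, if_true,
    if_false]
  ring

lemma okMul_apply_20 : okMul R x y (okIdx 2 0) = x (okIdx 1 0) * y (okIdx 1 0)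
    - x (okIdx 0 2) * y (okIdx 2 1) - x (okIdx 1 2) * y (okIdx 1 1)
    - x (okIdx 2 2) * y (okIdx 0 1) := by
  simp (config := { decide := true }) only [okMul_apply_eq_sum, sum_okI, okc_eq_ite, if_true,
    if_false]
  ring

lemma okMul_apply_21 : okMul R x y (okIdx 2 1) = x (okIdx 1 2) * y (okIdx 1 2)
    - x (okIdx 0 2) * y (okIdx 2 2) - x (okIdx 1 1) * y (okIdx 1 0)
    - x (okIdx 2 0) * y (okIdx 0 1) := by
  simp (config := { decide := true }) only [okMul_apply_eq_sum, sum_okI, okc_eq_ite, if_true,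
    if_false]
  ring

lemma okMul_apply_22 : okMul R x y (okIdx 2 2) = x (okIdx 1 1) * y (okIdx 1 1)
    - x (okIdx 0 2) * y (okIdx 2 0) - x (okIdx 1 0) * y (okIdx 1 2)
    - x (okIdx 2 1) * y (okIdx 0 1) := by
  simp (config := { decide := true }) only [okMul_apply_eq_sum, sum_okI, okc_eq_ite, if_true,
    if_false]
  ring

end MultiplicationTable

lemma okN_eq (x : OkI → R) : okN R x = x (okIdx 1 0) * x (okIdx 2 0) +
    x (okIdx 0 1) * x (okIdx 0 2) + x (okIdx 1 1) * x (okIdx 2 2) +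
    x (okIdx 1 2) * x (okIdx 2 1) :=
  rfl

section Identities

variable {R} (x y z : OkI → R)

lemma okMul_okMul_self : okMul R (okMul R x y) x = okN R x • y := by
  funext k
  obtain rfl | rfl | rfl | rfl | rfl | rfl | rfl | rfl := okI_cases k <;>
    simp only [okMul_apply_01, okMul_apply_02, okMul_apply_10, okMul_apply_11, okMul_apply_12,
      okMul_apply_20, okMul_apply_21, okMul_apply_22, okN_eq, Pi.smul_apply, smul_eq_mul] <;>
    ring

lemma okMul_self_okMul : okMul R x (okMul R y x) = okN R x • y := by
  funext k
  obtain rfl | rfl | rfl | rfl | rfl | rfl | rfl | rfl := okI_cases k <;>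
    simp only [okMul_apply_01, okMul_apply_02, okMul_apply_10, okMul_apply_11, okMul_apply_12,
      okMul_apply_20, okMul_apply_21, okMul_apply_22, okN_eq, Pi.smul_apply, smul_eq_mul] <;>
    ring

lemma okN_okMul : okN R (okMul R x y) = okN R x * okN R y := by
  simp only [okN_eq, okMul_apply_01, okMul_apply_02, okMul_apply_10, okMul_apply_11,
    okMul_apply_12, okMul_apply_20, okMul_apply_21, okMul_apply_22]
  ring

lemma okB_okMul_left : okB R (okMul R x y) z = okB R x (okMul R y z) := by
  simp only [okB, okN_eq, Pi.add_apply, okMul_apply_01, okMul_apply_02, okMul_apply_10,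
    okMul_apply_11, okMul_apply_12, okMul_apply_20, okMul_apply_21, okMul_apply_22]
  ring

end Identities

/-- Over any field `F`, the split Okubo algebra satisfies
`(x*y)*x = n(x) • y = x*(y*x)`; consequently the norm is multiplicative and its polar
form is associative, i.e. `(O, *, n)` is a symmetric composition algebra. -/
theorem okubo_symmetric_composition (F : Type) [Field F] (x y z : OkI → F) :
    okMul F (okMul F x y) x = okN F x • y ∧
    okMul F x (okMul F y x) = okN F x • y ∧
    okN F (okMul F x y) = okN F x * okN F y ∧
    okB F (okMul F x y) z = okB F x (okMul F y z) :=
  ⟨okMul_okMul_self x y, okMul_self_okMul x y, okN_okMul x y, okB_okMul_left x y z⟩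
end

section
/- Let F be algebraically closed of characteristic 3. The bracket ⁅x, y⁆ := x*y − y*x makes the split Okubo algebra O into a Lie algebra over F (it satisfies antisymmetry and the Jacobi identity); this 8-dimensional Lie algebra is simple, and its Killing form is identically zero. -/
open scoped BigOperators

variable (R : Type) [CommRing R]

/-- The linear map `u ↦ ad*_u`, where `ad*_u (v) = u * v - v * u`. -/
def okAdL : (OkI → R) →ₗ[R] Module.End R (OkI → R) := okMul R - (okMul R).flip


/-!
In characteristic `3` the commutator of the split Okubo algebra is `[e_s, e_t] = Δ(s, t) e_{s+t}`,
because `c(s, t) - c(t, s) ≡ -2 Δ(s, t) ≡ Δ(s, t)`. Everything then reduces to the arithmetic of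
the symplectic form `Δ` on `𝔽₃²`: the Jacobi identity to a polynomial identity for `Δ`, and the
vanishing of the Killing form to `∑_c Δ(b, c)² = 6 = 0`.

For simplicity, `3a = 0` and `Δ(a, a + t) = Δ(a, t)` make `(ad e_a)³` diagonal,
`e_k ↦ Δ(a, k)³ e_k = Δ(a, k) e_k`. An ideal is therefore stable under multiplication by the
coordinate functions of `𝔽₃²`, hence by every function on `𝔽₃²` (polynomials interpolate on `𝔽₃`),
in particular by indicators of points. So a nonzero ideal contains some `e_k`, and bracketing with
basis vectors carries `e_k` to every `e_j`.
-/

open Module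

def multiplierSubalgebra {R A : Type*} [CommSemiring R] [Semiring A] [Algebra R A]
    (S : Submodule R A) : Subalgebra R A where
  carrier := {f | ∀ x ∈ S, f * x ∈ S}
  mul_mem' {f g} hf hg x hx := mul_assoc f g x ▸ hf _ (hg x hx)
  add_mem' {f g} hf hg x hx := add_mul f g x ▸ S.add_mem (hf x hx) (hg x hx)
  algebraMap_mem' r x hx := Algebra.smul_def r x ▸ S.smul_mem r hx

@[simp] lemma mem_multiplierSubalgebra {R A : Type*} [CommSemiring R] [Semiring A] [Algebra R A]
    {S : Submodule R A} {f : A} : f ∈ multiplierSubalgebra S ↔ ∀ x ∈ S, f * x ∈ S :=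
  Iff.rfl

def okDelta (g h : OkG) : ZMod 3 := g.1 * h.2 - g.2 * h.1

/-- `e_t`, extended by `e_0 = 0`, so that `[e_s, e_t] = Δ(s, t) e_{s+t}` holds for all `s t`. -/
def okEG (t : OkG) : OkI → R := fun k => if (k : OkG) = t then 1 else 0

variable {R}

@[simp] lemma okEG_zero : okEG R 0 = 0 := funext fun k => if_neg k.2

lemma okEG_coe (g : OkI) : okEG R g = okE R g := by
  funext k; simp [okEG, okE, Pi.single_apply, Subtype.ext_iff]

lemma basisFun_eq_okEG (g : OkI) : Pi.basisFun R OkI g = okEG R g := by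
  rw [Pi.basisFun_apply, okEG_coe, okE]

lemma okEG_ne_zero [Nontrivial R] {t : OkG} (ht : t ≠ 0) : okEG R t ≠ 0 := by
  lift t to OkI using ht
  rw [okEG_coe]
  exact Pi.single_ne_zero_iff.mpr one_ne_zero

lemma okMul_okE_okE (a b : OkI) :
    okMul R (okE R a) (okE R b) = okc R a b • okEG R (a + b) := by
  funext k
  simp [okMul, okMulFun, okE, okEG, Pi.single_apply, mul_ite, Finset.sum_ite_eq, eq_comm]

lemma okAdL_apply (x y : OkI → R) : okAdL R x y = okMul R x y - okMul R y x := rfl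

lemma okAdL_skew (x y : OkI → R) : okAdL R y x = -okAdL R x y := (neg_sub _ _).symm

lemma okDelta_swap (g h : OkG) : okDelta h g = -okDelta g h := by
  unfold okDelta; ring

lemma okc_eq (g h : OkG) : okc R g h = 1 - ((okDelta g h).cast : R) := by
  simp only [okc, Int.cast_sub, Int.cast_one, Int.cast_natCast]
  rw [ZMod.natCast_val]
  rfl

section CharThree

variable [CharP R 3]

lemma okc_sub_okc (g h : OkG) : okc R g h - okc R h g = ((okDelta g h).cast : R) := by
  rw [okc_eq, okc_eq, okDelta_swap g h, ZMod.cast_neg dvd_rfl]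
  linear_combination (-((okDelta g h).cast : R)) * CharP.cast_eq_zero R 3

theorem okAdL_okEG (s t : OkG) :
    okAdL R (okEG R s) (okEG R t) = ((okDelta s t).cast : R) • okEG R (s + t) := by
  rcases eq_or_ne s 0 with rfl | hs
  · simp [okDelta]
  rcases eq_or_ne t 0 with rfl | ht
  · simp [okDelta]
  lift s to OkI using hs
  lift t to OkI using ht
  rw [okEG_coe, okEG_coe, okAdL_apply, okMul_okE_okE, okMul_okE_okE, add_comm (t : OkG),
    ← sub_smul, okc_sub_okc]

lemma okDelta_jacobi (a b c : OkG) :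
    okDelta b c * okDelta a (b + c)
      = okDelta a b * okDelta (a + b) c + okDelta a c * okDelta b (a + c) := by
  simp only [okDelta, Prod.fst_add, Prod.snd_add]; ring

theorem okAdL_okAdL (x y : OkI → R) :
    okAdL R (okAdL R x y) = okAdL R x * okAdL R y - okAdL R y * okAdL R x := by
  let adMul := (LinearMap.mul R (End R (OkI → R))).compl₁₂ (okAdL R) (okAdL R)
  suffices h : adMul = (okAdL R).compr₂ (okAdL R) + adMul.flip from
    eq_sub_of_add_eq (LinearMap.congr_fun₂ h x y).symm
  refine LinearMap.ext_basis (Pi.basisFun R OkI) (Pi.basisFun R OkI) fun a b => ?_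
  refine (Pi.basisFun R OkI).ext fun c => ?_
  simp only [adMul, basisFun_eq_okEG, LinearMap.compr₂_apply, LinearMap.add_apply,
    LinearMap.compl₁₂_apply, LinearMap.flip_apply, LinearMap.mul_apply', Module.End.mul_apply,
    LinearMap.smul_apply, okAdL_okEG, map_smul, smul_smul, ← ZMod.cast_mul']
  rw [add_assoc (a : OkG), add_left_comm (b : OkG), ← add_smul, ← ZMod.cast_add', okDelta_jacobi]

theorem okAdL_jacobi (x y z : OkI → R) :
    okAdL R x (okAdL R y z) + okAdL R y (okAdL R z x) + okAdL R z (okAdL R x y) = 0 := by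
  rw [okAdL_skew (okAdL R x y), okAdL_okAdL, okAdL_skew x z]
  simp only [LinearMap.sub_apply, Module.End.mul_apply, map_neg]
  abel

lemma okAdL_okEG_pow_three (a : OkG) :
    okAdL R (okEG R a) ^ 3 = LinearMap.mulLeft R (fun k : OkI => ((okDelta a k).cast : R)) := by
  refine (Pi.basisFun R OkI).ext fun c => ?_
  have h3a : a + (a + (a + c)) = c := by
    have : ∀ a c : OkG, a + (a + (a + c)) = c := by decide
    exact this a c
  have hcube : ∀ d : ZMod 3, d * (d * d) = d := by decide
  have hshift : ∀ t : OkG, okDelta a (a + t) = okDelta a t := fun t => by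
    simp only [okDelta, Prod.fst_add, Prod.snd_add]; ring
  simp only [basisFun_eq_okEG, pow_succ, pow_zero, one_mul, Module.End.mul_apply, okAdL_okEG,
    map_smul, smul_smul, ← ZMod.cast_mul', hshift, hcube, h3a, LinearMap.mulLeft_apply]
  funext k
  by_cases hk : (k : OkG) = c <;> simp [okEG, hk]

/- Only `a + b = 0` contributes, and then the summand is `-Δ(b, c)²`, where `Δ(b, ·)` takes each
nonzero value three times. -/
lemma sum_okDelta_diag (a b : OkG) :
    ∑ c : OkI, (if a + (b + c) = c then okDelta b c * okDelta a (b + c) else 0) = 0 := by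
  revert a b; decide

lemma trace_okAdL_okEG_comp (a b : OkG) :
    LinearMap.trace R _ (okAdL R (okEG R a) ∘ₗ okAdL R (okEG R b)) = 0 := by
  rw [LinearMap.trace_eq_matrix_trace R (Pi.basisFun R OkI), LinearMap.toMatrix_eq_toMatrix',
    Matrix.trace]
  have h := congrArg (ZMod.castHom (dvd_refl 3) R) (sum_okDelta_diag a b)
  rw [map_sum, map_zero] at h
  convert h using 2 with c
  rw [Matrix.diag_apply, LinearMap.toMatrix'_apply, LinearMap.comp_apply, ← okE, ← okEG_coe,
    okAdL_okEG, map_smul, okAdL_okEG, smul_smul, ← ZMod.cast_mul']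
  simp [okEG, apply_ite (ZMod.castHom _ R), eq_comm, mul_comm]

theorem trace_okAdL_comp (x y : OkI → R) :
    LinearMap.trace R _ (okAdL R x ∘ₗ okAdL R y) = 0 := by
  let killing := ((LinearMap.mul R (End R (OkI → R))).compl₁₂ (okAdL R) (okAdL R)).compr₂
    (LinearMap.trace R (OkI → R))
  suffices h : killing = 0 from LinearMap.congr_fun₂ h x y
  refine LinearMap.ext_basis (Pi.basisFun R OkI) (Pi.basisFun R OkI) fun a b => ?_
  simp only [killing, basisFun_eq_okEG, LinearMap.compr₂_apply, LinearMap.compl₁₂_apply,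
    LinearMap.mul_apply', Module.End.mul_eq_comp, LinearMap.zero_apply]
  exact trace_okAdL_okEG_comp a b

lemma okDelta_cast_mem_multiplierSubalgebra {S : Submodule R (OkI → R)}
    (hS : ∀ x ∈ S, ∀ y, okAdL R y x ∈ S) (a : OkG) :
    (fun k : OkI => ((okDelta a k).cast : R)) ∈ multiplierSubalgebra S := by
  rw [mem_multiplierSubalgebra]
  intro x hx
  rw [← LinearMap.mulLeft_apply R, ← okAdL_okEG_pow_three]
  simp only [pow_succ, pow_zero, one_mul, Module.End.mul_apply]
  exact hS _ (hS _ (hS _ hx _) _) _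

lemma okEG_mem_multiplierSubalgebra {S : Submodule R (OkI → R)}
    (hS : ∀ x ∈ S, ∀ y, okAdL R y x ∈ S) (t : OkG) : okEG R t ∈ multiplierSubalgebra S := by
  have hfactor (a : OkG) :
      (fun k : OkI => ((1 - okDelta a (k - t) ^ 2 : ZMod 3).cast : R)) ∈
        multiplierSubalgebra S := by
    have h : (fun k : OkI => ((1 - okDelta a (k - t) ^ 2 : ZMod 3).cast : R)) =
        1 - ((fun k : OkI => ((okDelta a k).cast : R)) - algebraMap R _ (okDelta a t).cast) ^ 2 :=
      by
      funext k
      have hsub : okDelta a (k - t) = okDelta a k - okDelta a t := by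
        simp only [okDelta, Prod.fst_sub, Prod.snd_sub]; ring
      simp [hsub]
    rw [h]
    exact sub_mem (one_mem _)
      (pow_mem (sub_mem (okDelta_cast_mem_multiplierSubalgebra hS a) (algebraMap_mem _ _)) 2)
  have hind : ∀ u : OkG,
      (1 - okDelta (1, 0) u ^ 2) * (1 - okDelta (0, 1) u ^ 2) = if u = 0 then 1 else 0 := by
    decide
  convert mul_mem (hfactor (1, 0)) (hfactor (0, 1)) using 1
  funext k
  rw [Pi.mul_apply, ← ZMod.cast_mul', hind]
  by_cases hk : (k : OkG) = t <;> simp [okEG, hk, sub_eq_zero]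

end CharThree

section Field

variable {F : Type} [Field F] [CharP F 3] {S : Submodule F (OkI → F)}

lemma okE_mem_of_apply_ne_zero (hS : ∀ x ∈ S, ∀ y, okAdL F y x ∈ S) {x : OkI → F} (hx : x ∈ S)
    {k : OkI} (hk : x k ≠ 0) : okE F k ∈ S := by
  have h : okEG F k * x = x k • okE F k := by
    funext j
    by_cases hj : j = k
    · simp [okEG, okE, hj]
    · simp [okEG, okE, hj, Subtype.ext_iff.not.mp hj]
  rw [← S.smul_mem_iff hk, ← h]
  exact okEG_mem_multiplierSubalgebra hS k x hx

lemma okE_mem_of_okDelta_ne_zero (hS : ∀ x ∈ S, ∀ y, okAdL F y x ∈ S) {k j : OkI}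
    (hk : okE F k ∈ S) (hjk : okDelta j k ≠ 0) : okE F j ∈ S := by
  have h := hS _ hk (okEG F (j - k))
  have hshift : okDelta (j - k) k = okDelta j k := by
    simp only [okDelta, Prod.fst_sub, Prod.snd_sub]; ring
  rw [← okEG_coe, okAdL_okEG, sub_add_cancel, okEG_coe, hshift] at h
  have hcast : ((okDelta j k).cast : F) ≠ 0 := by
    rw [← ZMod.castHom_apply (h := dvd_refl 3)]
    exact (map_ne_zero _).mpr hjk
  exact (S.smul_mem_iff hcast).mp h

lemma okE_mem_of_okE_mem (hS : ∀ x ∈ S, ∀ y, okAdL F y x ∈ S) {k : OkI} (hk : okE F k ∈ S)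
    (j : OkI) : okE F j ∈ S := by
  -- the lines through `k` and `j` cover at most five of the nine points of `𝔽₃²`
  have hmid : ∀ k j : OkI, ∃ m : OkI, okDelta m k ≠ 0 ∧ okDelta j m ≠ 0 := by decide
  obtain ⟨m, hmk, hjm⟩ := hmid k j
  exact okE_mem_of_okDelta_ne_zero hS (okE_mem_of_okDelta_ne_zero hS hk hmk) hjm

theorem okAdL_ideal_eq_bot_or_eq_top (hS : ∀ x ∈ S, ∀ y, okAdL F y x ∈ S) : S = ⊥ ∨ S = ⊤ := by
  refine or_iff_not_imp_left.mpr fun hbot => ?_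
  obtain ⟨x, hx, hx0⟩ := (Submodule.ne_bot_iff S).mp hbot
  obtain ⟨k, hk⟩ := Function.ne_iff.mp hx0
  rw [eq_top_iff, ← (Pi.basisFun F OkI).span_eq, Submodule.span_le]
  rintro _ ⟨j, rfl⟩
  rw [SetLike.mem_coe, basisFun_eq_okEG, okEG_coe]
  exact okE_mem_of_okE_mem hS (okE_mem_of_apply_ne_zero hS hx hk) j

end Field

theorem okubo_minus_simple_killing_zero_general (F : Type) [Field F] [CharP F 3] :
    (∀ x y : OkI → F, okMul F x y - okMul F y x = -(okMul F y x - okMul F x y)) ∧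
    (∀ x : OkI → F, okMul F x x - okMul F x x = 0) ∧
    (∀ x y z : OkI → F,
      okAdL F x (okAdL F y z) + okAdL F y (okAdL F z x) + okAdL F z (okAdL F x y) = 0) ∧
    Module.finrank F (OkI → F) = 8 ∧
    (∀ S : Submodule F (OkI → F),
      (∀ x ∈ S, ∀ y : OkI → F, okMul F y x - okMul F x y ∈ S) → S = ⊥ ∨ S = ⊤) ∧
    (∃ x y : OkI → F, okMul F x y - okMul F y x ≠ 0) ∧
    (∀ x y : OkI → F,
      LinearMap.trace F (OkI → F) ((okAdL F x).comp (okAdL F y)) = 0) := by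
  refine ⟨fun x y => (neg_sub _ _).symm, fun x => sub_self _, okAdL_jacobi, ?_,
    fun S hS => okAdL_ideal_eq_bot_or_eq_top hS, ?_, trace_okAdL_comp⟩
  · rw [Module.finrank_fintype_fun_eq_card]
    rfl
  · refine ⟨okEG F (1, 0), okEG F (0, 1), ?_⟩
    rw [← okAdL_apply, okAdL_okEG]
    have hΔ : okDelta (1, 0) (0, 1) = 1 := by decide
    rw [hΔ, ZMod.cast_one', one_smul]
    exact okEG_ne_zero (by decide)

/-- Over an algebraically closed field of characteristic `3`, the bracket
`⁅x, y⁆ = x*y - y*x` makes the split Okubo algebra into a Lie algebra (antisymmetry and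
the Jacobi identity hold); this `8`-dimensional Lie algebra is simple and its Killing
form is identically zero. -/
theorem okubo_minus_simple_killing_zero (F : Type) [Field F] [IsAlgClosed F] [CharP F 3] :
    (∀ x y : OkI → F, okMul F x y - okMul F y x = -(okMul F y x - okMul F x y)) ∧
    (∀ x : OkI → F, okMul F x x - okMul F x x = 0) ∧
    (∀ x y z : OkI → F,
      okAdL F x (okAdL F y z) + okAdL F y (okAdL F z x) + okAdL F z (okAdL F x y) = 0) ∧
    Module.finrank F (OkI → F) = 8 ∧
    (∀ S : Submodule F (OkI → F),
      (∀ x ∈ S, ∀ y : OkI → F, okMul F y x - okMul F x y ∈ S) → S = ⊥ ∨ S = ⊤) ∧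
    (∃ x y : OkI → F, okMul F x y - okMul F y x ≠ 0) ∧
    (∀ x y : OkI → F,
      LinearMap.trace F (OkI → F) ((okAdL F x).comp (okAdL F y)) = 0) :=
  okubo_minus_simple_killing_zero_general F
end

section
/- Let F be algebraically closed of characteristic 3 and let e = Σ_{g ∈ I} e_g be the sum of all eight basis elements of the split Okubo algebra O. Then e*e = e, and the set of elements fixed by every automorphism of (O,*) is exactly the one-dimensional subspace F•e; that is, {v ∈ O | φ(v) = v for every F-linear bijection φ of O with φ(x*y) = φ(x)*φ(y) for all x,y} = F•e. -/
open scoped BigOperators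

variable (R : Type) [CommRing R]

/-! In characteristic `3` one has `c(g,h) + c(h,g) = -1` for all `g, h`, which gives
`e * x + x * e = x - (∑ x_g) e`; at `x = e` this is `e * e = e`. Conversely, if `f * x + x * f`
lies in `x + F f` for every `x`, testing against the basis shows that the coordinates of `f` are
invertible and multiplicative, `f_g f_h = f_{g+h}`; since `2g = -g`, this forces `f_g ^ 3 = 1`,
so `f_g = 1` by injectivity of Frobenius, i.e. `f = e`. Automorphisms preserve this property of
`f`, hence all fix `e`. In the other direction, `SL₂(𝔽₃)` preserves `Δ` and so acts on `O` by
automorphisms permuting the basis; it is transitive on `I`, so a vector fixed by all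
automorphisms has equal coordinates. -/

lemma okE_apply (h k : OkI) : okE R h k = if k = h then 1 else 0 :=
  Pi.single_apply h 1 k

lemma oke_apply (k : OkI) : oke R k = 1 := by
  simp [oke, okE_apply]

lemma sum_smul_okE (x : OkI → R) : ∑ g, x g • okE R g = x :=
  (pi_eq_sum_univ' x).symm

lemma okMul_okE_apply (x : OkI → R) (h k : OkI) :
    okMul R x (okE R h) k = ∑ g : OkI, if (g : OkG) + h = k then okc R g h * x g else 0 := by
  show okMulFun R x (okE R h) k = _
  simp [okMulFun, okE_apply, ite_mul]

lemma okE_okMul_apply (x : OkI → R) (h k : OkI) :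
    okMul R (okE R h) x k = ∑ g : OkI, if (h : OkG) + g = k then okc R h g * x g else 0 := by
  show okMulFun R (okE R h) x k = _
  simp [okMulFun, okE_apply, ite_mul]

lemma okMul_okE_apply_self (x : OkI → R) (h : OkI) : okMul R x (okE R h) h = 0 := by
  rw [okMul_okE_apply]
  exact Finset.sum_eq_zero fun g _ => if_neg (by simpa using g.2)

lemma okE_okMul_apply_self (x : OkI → R) (h : OkI) : okMul R (okE R h) x h = 0 := by
  rw [okE_okMul_apply]
  exact Finset.sum_eq_zero fun g _ => if_neg (by simpa using g.2)

lemma okMul_okE_apply_of_add_eq (x : OkI → R) {g h k : OkI} (hk : (g : OkG) + h = k) :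
    okMul R x (okE R h) k = okc R g h * x g := by
  rw [okMul_okE_apply, Fintype.sum_eq_single g fun g' hg' => if_neg ?_, if_pos hk]
  exact fun hg'k => hg' (Subtype.ext (add_right_cancel (hg'k.trans hk.symm)))

lemma okE_okMul_apply_of_add_eq (x : OkI → R) {g h k : OkI} (hk : (h : OkG) + g = k) :
    okMul R (okE R h) x k = okc R h g * x g := by
  rw [okE_okMul_apply, Fintype.sum_eq_single g fun g' hg' => if_neg ?_, if_pos hk]
  exact fun hg'k => hg' (Subtype.ext (add_left_cancel (hg'k.trans hk.symm)))

-- Over `ℤ` the sum is `2` when `Δ(g,h) = 0` and `-1` otherwise.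
lemma okc_add_okc_swap [CharP R 3] (g h : OkG) : okc R g h + okc R h g = -1 := by
  have hcast : ∀ g h, okc R g h = ZMod.castHom (dvd_refl 3) R (okc (ZMod 3) g h) := fun g h =>
    (map_intCast _ _).symm
  have hmod : ∀ g h : OkG, okc (ZMod 3) g h + okc (ZMod 3) h g = -1 := by decide
  rw [hcast, hcast, ← map_add, hmod, map_neg, map_one]

lemma oke_okMul_okE_add_okE_okMul_oke [CharP R 3] (h : OkI) :
    okMul R (oke R) (okE R h) + okMul R (okE R h) (oke R) = okE R h - oke R := by
  funext k
  simp only [Pi.add_apply, Pi.sub_apply, oke_apply, okE_apply]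
  by_cases hkh : k = h
  · subst hkh
    simp [okMul_okE_apply_self, okE_okMul_apply_self]
  · have hg : (k : OkG) - h ≠ 0 := sub_ne_zero.mpr fun hc => hkh (Subtype.ext hc)
    rw [okMul_okE_apply_of_add_eq R _ (g := ⟨_, hg⟩) (sub_add_cancel _ _),
      okE_okMul_apply_of_add_eq R _ (g := ⟨_, hg⟩) (add_sub_cancel _ _), oke_apply, if_neg hkh]
    simpa using okc_add_okc_swap R ((k : OkG) - h) h

lemma oke_okMul_add_okMul_oke [CharP R 3] (x : OkI → R) :
    okMul R (oke R) x + okMul R x (oke R) = x - (∑ g, x g) • oke R := by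
  conv_lhs => rw [← sum_smul_okE R x]
  simp only [map_sum, map_smul, LinearMap.sum_apply, LinearMap.smul_apply,
    ← Finset.sum_add_distrib, ← smul_add]
  simp only [oke_okMul_okE_add_okE_okMul_oke, smul_sub, Finset.sum_sub_distrib, Finset.sum_smul,
    sum_smul_okE]

lemma oke_okMul_oke [CharP R 3] : okMul R (oke R) (oke R) = oke R := by
  funext k
  -- at `x = e` the identity above reads `2 (e * e) = -7 e`
  have hk := congrFun (oke_okMul_add_okMul_oke R (oke R)) k
  have h3 : (3 : R) = 0 := by exact_mod_cast CharP.cast_eq_zero R 3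
  have h8 : (∑ _g : OkI, (1 : R)) = 8 := by simp
  simp only [Pi.add_apply, Pi.sub_apply, Pi.smul_apply, oke_apply, smul_eq_mul, h8] at hk
  rw [oke_apply]
  linear_combination -hk + (okMul R (oke R) (oke R) k + 2) * h3

def IsOkQuasiUnit (f : OkI → R) : Prop :=
  ∀ x, ∃ d : R, okMul R f x + okMul R x f = x + d • f

lemma isOkQuasiUnit_oke [CharP R 3] : IsOkQuasiUnit R (oke R) := fun x =>
  ⟨-∑ g, x g, by rw [oke_okMul_add_okMul_oke, neg_smul, sub_eq_add_neg]⟩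

variable {R}

lemma IsOkQuasiUnit.map {f : OkI → R} (hf : IsOkQuasiUnit R f)
    (φ : (OkI → R) ≃ₗ[R] (OkI → R))
    (hφ : ∀ x y, φ (okMul R x y) = okMul R (φ x) (φ y)) :
    IsOkQuasiUnit R (φ f) := by
  intro x
  obtain ⟨d, hd⟩ := hf (φ.symm x)
  refine ⟨d, ?_⟩
  calc okMul R (φ f) x + okMul R x (φ f)
      = φ (okMul R f (φ.symm x) + okMul R (φ.symm x) f) := by
        rw [map_add, hφ, hφ, φ.apply_symm_apply]
    _ = x + d • φ f := by rw [hd, map_add, map_smul, φ.apply_symm_apply]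

lemma mul_apply_eq_neg_one_of_okMul_okE_add {f : OkI → R} {h : OkI} {d : R}
    (hd : okMul R f (okE R h) + okMul R (okE R h) f = okE R h + d • f) : d * f h = -1 := by
  have hh := congrFun hd h
  simp only [Pi.add_apply, Pi.smul_apply, smul_eq_mul, okMul_okE_apply_self, okE_okMul_apply_self,
    okE_apply, ↓reduceIte] at hh
  linear_combination -hh

lemma IsOkQuasiUnit.isUnit_apply {f : OkI → R} (hf : IsOkQuasiUnit R f) (h : OkI) :
    IsUnit (f h) := by
  obtain ⟨d, hd⟩ := hf (okE R h)
  have hdh := mul_apply_eq_neg_one_of_okMul_okE_add hd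
  exact IsUnit.of_mul_eq_one (-d) (by linear_combination -hdh)

lemma IsOkQuasiUnit.apply_mul_apply [CharP R 3] {f : OkI → R} (hf : IsOkQuasiUnit R f)
    {g h k : OkI} (hk : (g : OkG) + h = k) : f g * f h = f k := by
  obtain ⟨d, hd⟩ := hf (okE R h)
  have hdh := mul_apply_eq_neg_one_of_okMul_okE_add hd
  have hkh : k ≠ h := fun hc => g.2 (by simpa [hc] using hk)
  have hdk := congrFun hd k
  simp only [Pi.add_apply, Pi.smul_apply, smul_eq_mul, okE_apply, if_neg hkh,
    okMul_okE_apply_of_add_eq R f hk,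
    okE_okMul_apply_of_add_eq R f ((add_comm _ _).trans hk)] at hdk
  linear_combination -f h * hdk + f g * f h * okc_add_okc_swap R g h - f k * hdh

lemma IsOkQuasiUnit.eq_oke [IsReduced R] [CharP R 3] {f : OkI → R} (hf : IsOkQuasiUnit R f) :
    f = oke R := by
  funext g
  have hdouble : ∀ a : OkG, a + a = -a := by decide
  let g' : OkI := ⟨-g, neg_ne_zero.mpr g.2⟩
  have h₁ : f g * f g = f g' := hf.apply_mul_apply (hdouble g)
  have h₂ : f g' * f g' = f g := hf.apply_mul_apply ((hdouble _).trans (neg_neg _))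
  have hcube : f g ^ 3 = 1 := (hf.isUnit_apply g).mul_left_cancel <| by
    linear_combination (f g * f g + f g') * h₁ + h₂
  rw [oke_apply]
  exact frobenius_inj R 3 (by simpa [frobenius_def] using hcube)

def okDet (g h : OkG) : ZMod 3 := g.1 * h.2 - g.2 * h.1

def okPerm (A : OkG ≃+ OkG) : OkI ≃ OkI :=
  A.toEquiv.subtypeEquiv fun _ => (map_ne_zero_iff A A.injective).symm

variable (R) in
def okPrecomp (A : OkG ≃+ OkG) : (OkI → R) ≃ₗ[R] (OkI → R) :=
  LinearEquiv.funCongrLeft R R (okPerm A)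

lemma okPrecomp_apply (A : OkG ≃+ OkG) (x : OkI → R) (k : OkI) :
    okPrecomp R A x k = x ⟨A k, (map_ne_zero_iff A A.injective).mpr k.2⟩ :=
  rfl

lemma okPrecomp_okMul {A : OkG ≃+ OkG} (hA : ∀ g h, okDet (A g) (A h) = okDet g h)
    (x y : OkI → R) :
    okPrecomp R A (okMul R x y) = okMul R (okPrecomp R A x) (okPrecomp R A y) := by
  have hc : ∀ g h, okc R (A g) (A h) = okc R g h := fun g h =>
    congrArg (fun t : ZMod 3 => ((1 - (t.val : ℤ) : ℤ) : R)) (hA g h)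
  funext k
  show okMulFun R x y (okPerm A k) = okMulFun R (x ∘ okPerm A) (y ∘ okPerm A) k
  refine (Fintype.sum_equiv (okPerm A) _ _ fun g =>
    Fintype.sum_equiv (okPerm A) _ _ fun h => ?_).symm
  simp [okPerm, ← map_add, hc]

def okSL {a b c d : ZMod 3} (h : a * d - b * c = 1) : OkG ≃+ OkG where
  toFun u := (a * u.1 + b * u.2, c * u.1 + d * u.2)
  invFun u := (d * u.1 - b * u.2, a * u.2 - c * u.1)
  left_inv u := Prod.ext (by dsimp; linear_combination u.1 * h)
    (by dsimp; linear_combination u.2 * h)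
  right_inv u := Prod.ext (by dsimp; linear_combination u.1 * h)
    (by dsimp; linear_combination u.2 * h)
  map_add' u w := by ext <;> dsimp <;> ring

lemma okDet_okSL {a b c d : ZMod 3} (h : a * d - b * c = 1) (u w : OkG) :
    okDet (okSL h u) (okSL h w) = okDet u w := by
  simp only [okDet, okSL, AddEquiv.coe_mk, Equiv.coe_fn_mk]
  linear_combination (u.1 * w.2 - u.2 * w.1) * h

lemma exists_okDet_preserving_apply_eq (g : OkG) (hg : g ≠ 0) :
    ∃ A : OkG ≃+ OkG, (∀ u w, okDet (A u) (A w) = okDet u w) ∧ A (1, 0) = g := by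
  obtain ⟨b, d, h⟩ : ∃ b d : ZMod 3, g.1 * d - b * g.2 = 1 := by revert g; decide
  exact ⟨okSL h, okDet_okSL h, by simp [okSL]⟩

theorem okubo_fixed_elements_char_three_general (F : Type) [Field F] [CharP F 3] :
    okMul F (oke F) (oke F) = oke F ∧
    {v : OkI → F | ∀ φ : (OkI → F) ≃ₗ[F] (OkI → F),
        (∀ x y, φ (okMul F x y) = okMul F (φ x) (φ y)) → φ v = v} =
      {v : OkI → F | ∃ c : F, v = c • oke F} := by
  refine ⟨oke_okMul_oke F, Set.ext fun v => ⟨fun hv => ?_, ?_⟩⟩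
  · refine ⟨v ⟨(1, 0), by decide⟩, funext fun g => ?_⟩
    obtain ⟨A, hA, hAg⟩ := exists_okDet_preserving_apply_eq g.1 g.2
    have hfix := congrFun (hv _ (okPrecomp_okMul hA)) ⟨(1, 0), by decide⟩
    simpa [okPrecomp_apply, hAg, oke_apply] using hfix
  · rintro ⟨c, rfl⟩ φ hφ
    rw [map_smul, ((isOkQuasiUnit_oke F).map φ hφ).eq_oke]

/-- Over an algebraically closed field of characteristic `3`, the sum
`e` of all eight basis elements of the split Okubo algebra is an idempotent, and the set
of elements fixed by every automorphism of `(O, *)` is exactly the line `F • e`. -/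
theorem okubo_fixed_elements_char_three (F : Type) [Field F] [IsAlgClosed F] [CharP F 3] :
    okMul F (oke F) (oke F) = oke F ∧
    {v : OkI → F | ∀ φ : (OkI → F) ≃ₗ[F] (OkI → F),
        (∀ x y, φ (okMul F x y) = okMul F (φ x) (φ y)) → φ v = v} =
      {v : OkI → F | ∃ c : F, v = c • oke F} :=
  okubo_fixed_elements_char_three_general F
end
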